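/- Compositions along distinct unpaired bases commute after reindexing: let σ be a structure with unpaired bases i < i', and let τ=(m,Q) and τ' be 0-structures. Then (σ∘_{i'}τ')∘_iτ = (σ∘_iτ)∘_{i'+m−1}τ'. -/

import Mathlib

/-!
Formalization of higher RNA structures, compositions, decomposability,
folded sequences, alignments and scores, following M. Brinkmeier,
"Structural Alignments of pseudo-knotted RNA-molecules in polynomial time".
-/

namespace RNA

/-- A (raw) RNA structure: a number of bases, a set of pairings and an
optional gap position (`none` = 0-structure, `some k` = 1-structure). -/
structure Struct where
  n : ℕ
  pairs : Finset (ℕ × ℕ)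
  gap : Option ℕ
deriving DecidableEq

/-- A structural element: an unpaired base or a pairing. -/
abbrev Elem : Type := ℕ ⊕ ℕ × ℕ

namespace Struct

/-- Base `i` is paired in `σ`. -/
def Paired (σ : Struct) (i : ℕ) : Prop := ∃ p ∈ σ.pairs, i = p.1 ∨ i = p.2

instance (σ : Struct) (i : ℕ) : Decidable (σ.Paired i) :=
  inferInstanceAs (Decidable (∃ p ∈ σ.pairs, i = p.1 ∨ i = p.2))

/-- `σ` is a well-formed structure: all pairings `(i,j)` satisfy
`1 ≤ i < j ≤ n`, distinct pairings are disjoint as two-element sets, and the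
gap (if present) lies in `[0,n]`. -/
def Valid (σ : Struct) : Prop :=
  (∀ p ∈ σ.pairs, 1 ≤ p.1 ∧ p.1 < p.2 ∧ p.2 ≤ σ.n) ∧
  (∀ p ∈ σ.pairs, ∀ q ∈ σ.pairs, p ≠ q →
    p.1 ≠ q.1 ∧ p.1 ≠ q.2 ∧ p.2 ≠ q.1 ∧ p.2 ≠ q.2) ∧
  (∀ k ∈ σ.gap, k ≤ σ.n)

/-- The unpaired bases of `σ`. -/
def unpairedBases (σ : Struct) : Finset ℕ :=
  (Finset.Icc 1 σ.n).filter (fun i => ¬ σ.Paired i)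

/-- The structural elements of `σ`: unpaired bases and pairings. -/
def elems (σ : Struct) : Finset Elem :=
  σ.unpairedBases.image Sum.inl ∪ σ.pairs.image Sum.inr

/-- The gap of `σ`, defaulting to `0`. -/
def gapD (σ : Struct) : ℕ := σ.gap.getD 0

end Struct

/-- The identity 0-structure: a single unpaired base. -/
def ident0 : Struct := ⟨1, ∅, none⟩

/-- The identity 1-structure: a single pairing with the gap between its bases. -/
def ident1 : Struct := ⟨2, {(1, 2)}, some 1⟩

/-- The empty 0-structure. -/
def empty0 : Struct := ⟨0, ∅, none⟩

/-- The empty 1-structure. -/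
def empty1 : Struct := ⟨0, ∅, some 0⟩

/-- Composition `σ ∘ᵢ τ` of `σ` along an unpaired base `i` with a
0-structure `τ`: base `i` is replaced by the `τ.n` bases of `τ`. -/
def composeBase (σ : Struct) (i : ℕ) (τ : Struct) : Struct where
  n := σ.n + τ.n - 1
  pairs :=
    σ.pairs.image (fun p =>
      ((if p.1 < i then p.1 else p.1 + τ.n - 1),
       (if p.2 < i then p.2 else p.2 + τ.n - 1)))
    ∪ τ.pairs.image (fun q => (q.1 + i - 1, q.2 + i - 1))
  gap := σ.gap.map (fun k => if k < i then k else k + τ.n - 1)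

/-- Composition `σ ∘₍ᵢ,ⱼ₎ τ` of `σ` along a pairing `(i,j)` with a
1-structure `τ`: the pairing is deleted, the first leg of `τ` replaces base
`i` and the second leg replaces base `j`. -/
def composePair (σ : Struct) (i j : ℕ) (τ : Struct) : Struct where
  n := σ.n + τ.n - 2
  pairs :=
    (σ.pairs.erase (i, j)).image (fun p =>
      ((if p.1 < i then p.1 else if p.1 < j then p.1 + τ.gapD - 1 else p.1 + τ.n - 2),
       (if p.2 < i then p.2 else if p.2 < j then p.2 + τ.gapD - 1 else p.2 + τ.n - 2)))
    ∪ τ.pairs.image (fun q =>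
      ((if q.1 ≤ τ.gapD then q.1 + i - 1 else q.1 + j - 2),
       (if q.2 ≤ τ.gapD then q.2 + i - 1 else q.2 + j - 2)))
  gap := σ.gap.map (fun k =>
    if k < i then k else if k < j then k + τ.gapD - 1 else k + τ.n - 2)

/-- The number of bases contributed by base `b` of `τ` in a simultaneous
composition substituting `ρ χ` for the structural element `χ`:
an unpaired base contributes the whole 0-structure, the left (right) end of a
pairing contributes the first (second) leg of the corresponding 1-structure. -/
def contrib (τ : Struct) (ρ : Elem → Struct) (b : ℕ) : ℕ :=
  (if τ.Paired b then 0 else (ρ (Sum.inl b)).n)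
  + ∑ p ∈ τ.pairs.filter (fun p => p.1 = b), (ρ (Sum.inr p)).gapD
  + ∑ p ∈ τ.pairs.filter (fun p => p.2 = b), ((ρ (Sum.inr p)).n - (ρ (Sum.inr p)).gapD)

/-- The position in the composed structure of the first base replacing base
`b` of `τ`. -/
def start (τ : Struct) (ρ : Elem → Struct) (b : ℕ) : ℕ :=
  1 + ∑ b' ∈ Finset.Ico 1 b, contrib τ ρ b'

/-- Simultaneous composition `τ ∘ (ρ χ₁, …, ρ χ_ι)` of `τ` with one structure
for each of its structural elements (a 0-structure for each unpaired base, a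
1-structure for each pairing). -/
def composeAll (τ : Struct) (ρ : Elem → Struct) : Struct where
  n := ∑ b ∈ Finset.Icc 1 τ.n, contrib τ ρ b
  pairs :=
    (τ.unpairedBases.biUnion (fun b => (ρ (Sum.inl b)).pairs.image
      (fun q => (q.1 + start τ ρ b - 1, q.2 + start τ ρ b - 1))))
    ∪ (τ.pairs.biUnion (fun p => (ρ (Sum.inr p)).pairs.image
      (fun q =>
        ((if q.1 ≤ (ρ (Sum.inr p)).gapD then q.1 + start τ ρ p.1 - 1
          else q.1 - (ρ (Sum.inr p)).gapD + start τ ρ p.2 - 1),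
         (if q.2 ≤ (ρ (Sum.inr p)).gapD then q.2 + start τ ρ p.1 - 1
          else q.2 - (ρ (Sum.inr p)).gapD + start τ ρ p.2 - 1)))))
  gap := τ.gap.map (fun k => ∑ b ∈ Finset.Icc 1 k, contrib τ ρ b)

/-- A structure is `Γ`-decomposable if it is an identity or a simultaneous
composition of a generator `τ ∈ Γ` with `Γ`-decomposable structures, one of
the appropriate type for each structural element of `τ`. -/
inductive Decomposable (Γ : Finset Struct) : Struct → Prop
  | isId0 : Decomposable Γ ident0
  | isId1 : Decomposable Γ ident1
  | comp (τ : Struct) (ρ : Elem → Struct) :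
      τ ∈ Γ →
      (∀ i, Sum.inl i ∈ τ.elems → (ρ (Sum.inl i)).gap = none) →
      (∀ p, Sum.inr p ∈ τ.elems → (ρ (Sum.inr p)).gap ≠ none) →
      (∀ i, Sum.inl i ∈ τ.elems → Decomposable Γ (ρ (Sum.inl i))) →
      (∀ p, Sum.inr p ∈ τ.elems → Decomposable Γ (ρ (Sum.inr p))) →
      Decomposable Γ (composeAll τ ρ)

/-! The generators of the paper. -/

def gConcat  : Struct := ⟨2, ∅, none⟩
def gLoop    : Struct := ⟨2, {(1, 2)}, none⟩
def gDisconn : Struct := ⟨2, ∅, some 1⟩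
def gLembed  : Struct := ⟨1, ∅, some 1⟩
def gRembed  : Struct := ⟨1, ∅, some 0⟩
def gLconcat : Struct := ⟨3, {(2, 3)}, some 2⟩
def gRconcat : Struct := ⟨3, {(1, 2)}, some 1⟩
def gLinsert : Struct := ⟨3, {(1, 3)}, some 2⟩
def gRinsert : Struct := ⟨3, {(1, 3)}, some 1⟩
def gLwrap   : Struct := ⟨4, {(1, 3), (2, 4)}, some 3⟩
def gRwrap   : Struct := ⟨4, {(1, 3), (2, 4)}, some 1⟩
def gNest    : Struct := ⟨4, {(1, 4), (2, 3)}, some 2⟩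
def gCross   : Struct := ⟨4, {(1, 3), (2, 4)}, some 2⟩

/-- The generator set `𝒢` of the paper. -/
def calG : Finset Struct :=
  {gConcat, gLoop, gDisconn, gLembed, gRembed, gLconcat, gRconcat,
   gLinsert, gRinsert, gLwrap, gRwrap, gNest, gCross}

/-! Folded sequences.  The blank `∘` is represented by `none : Option α`. -/

/-- A folded sequence: a structure together with a word (the letter of base
`i` is entry `i-1` of the list). -/
structure FSeq (α : Type) where
  str : Struct
  word : List α

/-- A folded sequence is well-formed if the word has exactly one letter for
each base. -/
def FSeq.WF {α : Type} (F : FSeq α) : Prop := F.word.length = F.str.n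

/-- The label of base `i` (1-based) in the word `t`, blanks off the end. -/
def labAt {α : Type} (t : List (Option α)) (i : ℕ) : Option α := t.getD (i - 1) none

/-- Base `i` (1-based) of the word `t` carries a non-blank letter. -/
def kept {α : Type} (t : List (Option α)) (i : ℕ) : Bool := (labAt t i).isSome

/-- The number of non-blank bases among `1, …, i`; this is the new index of
base `i` after removing all blanks. -/
def rank {α : Type} (t : List (Option α)) (i : ℕ) : ℕ :=
  ((Finset.Icc 1 i).filter (fun j => kept t j = true)).card

/-- The projection `π(σ,t)`: remove all bases labelled with the blank,
removing a pairing entirely if at least one of its bases is blank. -/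
def proj {α : Type} (σ : Struct) (t : List (Option α)) : FSeq α where
  str :=
    { n := rank t σ.n
      pairs := (σ.pairs.filter (fun p => kept t p.1 = true ∧ kept t p.2 = true)).image
          (fun p => (rank t p.1, rank t p.2))
      gap := σ.gap.map (rank t) }
  word := (t.take σ.n).reduceOption

/-- `(σ, t1, t2)` is a structural alignment of the folded sequences `F1` and
`F2`: projecting the two rows yields `F1` and `F2`, and each pairing of `σ`
is labelled by two letters or two blanks in each row. -/
def IsAlignment {α : Type} (F1 F2 : FSeq α) (σ : Struct)
    (t1 t2 : List (Option α)) : Prop :=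
  t1.length = σ.n ∧ t2.length = σ.n ∧ proj σ t1 = F1 ∧ proj σ t2 = F2 ∧
  ∀ p ∈ σ.pairs, kept t1 p.1 = kept t1 p.2 ∧ kept t2 p.1 = kept t2 p.2

/-- A score function: nonnegative scores for aligned bases and aligned
pairings, vanishing on exact matches. -/
structure ScoreFn (α : Type) where
  base : Option α → Option α → ℝ
  pair : Option α × Option α → Option α × Option α → ℝ
  base_nonneg : ∀ x y, 0 ≤ base x y
  pair_nonneg : ∀ u v, 0 ≤ pair u v
  base_refl : ∀ x, base x x = 0
  pair_refl : ∀ x y : α, pair (some x, some y) (some x, some y) = 0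
  pair_blank : pair (none, none) (none, none) = 0

/-- The score of an alignment: the sum of the scores of its structural
elements. -/
noncomputable def alignScore {α : Type} (S : ScoreFn α) (σ : Struct)
    (t1 t2 : List (Option α)) : ℝ :=
  (∑ i ∈ σ.unpairedBases, S.base (labAt t1 i) (labAt t2 i))
  + ∑ p ∈ σ.pairs, S.pair (labAt t1 p.1, labAt t1 p.2) (labAt t2 p.1, labAt t2 p.2)

/-- The score of a minimum alignment of `F1` and `F2`. -/
noncomputable def minScore {α : Type} (S : ScoreFn α) (F1 F2 : FSeq α) : ℝ :=
  sInf {x : ℝ | ∃ σ t1 t2, IsAlignment F1 F2 σ t1 t2 ∧ alignScore S σ t1 t2 = x}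

/-- `i` is an end of some pairing in `P`. -/
def endOf (P : Finset (ℕ × ℕ)) (i : ℕ) : Prop := ∃ p ∈ P, i = p.1 ∨ i = p.2

instance (P : Finset (ℕ × ℕ)) (i : ℕ) : Decidable (endOf P i) :=
  inferInstanceAs (Decidable (∃ p ∈ P, i = p.1 ∨ i = p.2))

/-- The number of bases in `1, …, i` which are not ends of pairings in `P`;
the new index of base `i` after removing the pairings in `P` with their
bases. -/
def rrank (P : Finset (ℕ × ℕ)) (i : ℕ) : ℕ :=
  ((Finset.Icc 1 i).filter (fun j => ¬ endOf P j)).card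

/-- `σ ∖ P`: remove from `σ` all pairings in `P` together with their bases. -/
def removePairs (σ : Struct) (P : Finset (ℕ × ℕ)) : Struct where
  n := rrank P σ.n
  pairs := (σ.pairs \ P).image (fun p => (rrank P p.1, rrank P p.2))
  gap := σ.gap.map (rrank P)

/-- An alignment is `Γ`-semi-decomposable if after removing a set of pairings
which are matched against blanks in one of the two rows, the remaining core
structure is `Γ`-decomposable. -/
def SemiDecomposable {α : Type} (Γ : Finset Struct) (σ : Struct)
    (t1 t2 : List (Option α)) : Prop :=
  ∃ P ⊆ σ.pairs,
    (∀ p ∈ P, (labAt t1 p.1 = none ∧ labAt t1 p.2 = none) ∨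
              (labAt t2 p.1 = none ∧ labAt t2 p.2 = none)) ∧
    Decomposable Γ (removePairs σ P)

/-! Restrictions of structures and folded sequences to intervals. -/

/-- Base `i` survives the restriction of `σ` to the interval `[a,b]`:
it lies in `[a,b]` and is not an end of a pairing reaching outside `[a,b]`. -/
def keptIv (σ : Struct) (a b i : ℕ) : Prop :=
  a ≤ i ∧ i ≤ b ∧
    ¬ ∃ p ∈ σ.pairs, (i = p.1 ∨ i = p.2) ∧ ¬ (a ≤ p.1 ∧ p.1 ≤ b ∧ a ≤ p.2 ∧ p.2 ≤ b)

instance (σ : Struct) (a b i : ℕ) : Decidable (keptIv σ a b i) :=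
  inferInstanceAs (Decidable (_ ∧ _ ∧ ¬ ∃ p ∈ σ.pairs, _))

/-- New index of base `i` in the restriction of `σ` to `[a,b]`. -/
def rankIv (σ : Struct) (a b i : ℕ) : ℕ :=
  ((Finset.Icc 1 i).filter (fun j => keptIv σ a b j)).card

/-- The restriction `σ[a,b]` of a structure to the interval `[a,b]`,
removing all bases outside `[a,b]` and all pairings with at least one end
outside `[a,b]` (together with their bases). -/
def Struct.restrict0 (σ : Struct) (a b : ℕ) : Struct where
  n := rankIv σ a b σ.n
  pairs := (σ.pairs.filter (fun p => a ≤ p.1 ∧ p.1 ≤ b ∧ a ≤ p.2 ∧ p.2 ≤ b)).image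
      (fun p => (rankIv σ a b p.1, rankIv σ a b p.2))
  gap := none

/-- `i` lies in the interval `[a,b]`. -/
def inIv (a b i : ℕ) : Prop := a ≤ i ∧ i ≤ b

instance (a b i : ℕ) : Decidable (inIv a b i) := inferInstanceAs (Decidable (_ ∧ _))

/-- Base `i` survives the restriction of `σ` to the pair of intervals
`[a,b]`, `[c,d]`. -/
def keptIv2 (σ : Struct) (a b c d i : ℕ) : Prop :=
  (inIv a b i ∨ inIv c d i) ∧
    ¬ ∃ p ∈ σ.pairs, (i = p.1 ∨ i = p.2) ∧
      ¬ ((inIv a b p.1 ∨ inIv c d p.1) ∧ (inIv a b p.2 ∨ inIv c d p.2))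

instance (σ : Struct) (a b c d i : ℕ) : Decidable (keptIv2 σ a b c d i) :=
  inferInstanceAs (Decidable (_ ∧ ¬ ∃ p ∈ σ.pairs, _))

/-- New index of base `i` in the restriction of `σ` to `[a,b] ; [c,d]`. -/
def rankIv2 (σ : Struct) (a b c d i : ℕ) : ℕ :=
  ((Finset.Icc 1 i).filter (fun j => keptIv2 σ a b c d j)).card

/-- The restriction `σ[a,b; c,d]` of a structure to two intervals, a
1-structure with the gap between them; pairings with at least one end outside
`[a,b] ∪ [c,d]` are removed together with their bases. -/
def Struct.restrict1 (σ : Struct) (a b c d : ℕ) : Struct where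
  n := rankIv2 σ a b c d σ.n
  pairs := (σ.pairs.filter (fun p =>
      (inIv a b p.1 ∨ inIv c d p.1) ∧ (inIv a b p.2 ∨ inIv c d p.2))).image
      (fun p => (rankIv2 σ a b c d p.1, rankIv2 σ a b c d p.2))
  gap := some (rankIv2 σ a b c d b)

/-- The restriction `(σ,s)[a,b]` of a folded sequence. -/
def FSeq.restrict0 {α : Type} [Inhabited α] (F : FSeq α) (a b : ℕ) : FSeq α where
  str := F.str.restrict0 a b
  word := ((List.range F.str.n).filter (fun idx => decide (keptIv F.str a b (idx + 1)))).map
      (fun idx => F.word.getD idx default)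

/-- The restriction `(σ,s)[a,b; c,d]` of a folded sequence. -/
def FSeq.restrict1 {α : Type} [Inhabited α] (F : FSeq α) (a b c d : ℕ) : FSeq α where
  str := F.str.restrict1 a b c d
  word := ((List.range F.str.n).filter (fun idx => decide (keptIv2 F.str a b c d (idx + 1)))).map
      (fun idx => F.word.getD idx default)

/-- The letter at base `i` of a folded sequence. -/
def FSeq.lab {α : Type} [Inhabited α] (F : FSeq α) (i : ℕ) : α := F.word.getD (i - 1) default

/-! τ-splittings. -/

/-- A `τ`-splitting of `σ`: a partition of `[1,σ.n]` into `τ.n` consecutive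
(possibly empty) intervals `I^b = [e (b-1) + 1, e b]`, respecting the gaps. -/
structure Splitting (τ σ : Struct) where
  e : ℕ → ℕ
  e_zero : e 0 = 0
  e_last : e τ.n = σ.n
  mono : Monotone e
  gap_ok : ∀ g ∈ τ.gap, ∀ k ∈ σ.gap, e g = k

namespace Splitting

variable {τ σ : Struct}

/-- Base `i` of `σ` lies in the `b`-th interval of the splitting. -/
def inBlock (sp : Splitting τ σ) (b i : ℕ) : Prop := sp.e (b - 1) < i ∧ i ≤ sp.e b

instance (sp : Splitting τ σ) (b i : ℕ) : Decidable (sp.inBlock b i) :=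
  inferInstanceAs (Decidable (_ ∧ _))

/-- The pairing `p` of `σ` is incompatible with the splitting: its two ends
lie in two different intervals whose indices do not form a pairing of `τ`. -/
def Incompat (sp : Splitting τ σ) (p : ℕ × ℕ) : Prop :=
  ∃ b ∈ Finset.Icc 1 τ.n, ∃ c ∈ Finset.Icc 1 τ.n,
    sp.inBlock b p.1 ∧ sp.inBlock c p.2 ∧ b ≠ c ∧ (b, c) ∉ τ.pairs

instance (sp : Splitting τ σ) (p : ℕ × ℕ) : Decidable (sp.Incompat p) :=
  inferInstanceAs (Decidable (∃ b ∈ Finset.Icc 1 τ.n, ∃ c ∈ Finset.Icc 1 τ.n,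
    sp.inBlock b p.1 ∧ sp.inBlock c p.2 ∧ b ≠ c ∧ (b, c) ∉ τ.pairs))

/-- The set of pairings of `σ` incompatible with the splitting. -/
def incompatSet (sp : Splitting τ σ) : Finset (ℕ × ℕ) :=
  σ.pairs.filter (fun p => sp.Incompat p)

/-- Base `i` of `σ` survives the removal of all incompatible pairings. -/
def surv (sp : Splitting τ σ) (i : ℕ) : Prop :=
  1 ≤ i ∧ i ≤ σ.n ∧ ¬ ∃ p ∈ σ.pairs, sp.Incompat p ∧ (i = p.1 ∨ i = p.2)

instance (sp : Splitting τ σ) (i : ℕ) : Decidable (sp.surv i) :=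
  inferInstanceAs (Decidable (_ ∧ _ ∧ ¬ ∃ p ∈ σ.pairs, _))

/-- The number of surviving bases among `1, …, x`. -/
def survCount (sp : Splitting τ σ) (x : ℕ) : ℕ :=
  ((Finset.Icc 1 x).filter (fun i => sp.surv i)).card

/-- The splitting is proper: after removing all incompatible pairings the
induced splitting contains no empty interval. -/
def Proper (sp : Splitting τ σ) : Prop :=
  ∀ b ∈ Finset.Icc 1 τ.n, sp.survCount (sp.e (b - 1)) < sp.survCount (sp.e b)

end Splitting

/-- The score of a minimum `Γ`-semi-decomposable alignment of `F1` and `F2`. -/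
noncomputable def minScoreDecomp {α : Type} (Γ : Finset Struct) (S : ScoreFn α)
    (F1 F2 : FSeq α) : ℝ :=
  sInf {x : ℝ | ∃ σ t1 t2, IsAlignment F1 F2 σ t1 t2 ∧
    SemiDecomposable Γ σ t1 t2 ∧ alignScore S σ t1 t2 = x}


/-! Both compositions only shift indices: a base `x` of `σ` is moved by the maps
`reindex i m`, which commute in the form `reindex_reindex`, while the bases of `τ` and `τ'`
occupy the same blocks of positions on both sides. -/

theorem Struct.ext {σ ρ : Struct} (hn : σ.n = ρ.n) (hpairs : σ.pairs = ρ.pairs)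
    (hgap : σ.gap = ρ.gap) : σ = ρ := by
  cases σ
  cases ρ
  congr

/-- The new index of a base `x ≠ i` of `σ` in `σ ∘ᵢ τ` when `τ` has `m` bases. -/
def reindex (i m x : ℕ) : ℕ := if x < i then x else x + m - 1

theorem reindex_of_lt {i x : ℕ} (m : ℕ) (h : x < i) : reindex i m x = x := if_pos h

theorem reindex_reindex {i i' : ℕ} (m m' x : ℕ) (hi : 1 ≤ i) (hii' : i < i') :
    reindex i m (reindex i' m' x) = reindex (i' + m - 1) m' (reindex i m x) := by
  unfold reindex
  split_ifs <;> omega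

theorem reindex_add_sub_one {i i' q : ℕ} (m : ℕ) (hq : 1 ≤ q) (hii' : i < i') :
    reindex i m (q + i' - 1) = q + (i' + m - 1) - 1 := by
  unfold reindex
  split_ifs <;> omega

theorem composeBase_pairs (σ τ : Struct) (i : ℕ) :
    (composeBase σ i τ).pairs =
      σ.pairs.image (Prod.map (reindex i τ.n) (reindex i τ.n))
        ∪ τ.pairs.image (Prod.map (· + i - 1) (· + i - 1)) :=
  rfl

theorem composeBase_gap (σ τ : Struct) (i : ℕ) :
    (composeBase σ i τ).gap = σ.gap.map (reindex i τ.n) :=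
  rfl

theorem composeBase_comm_general (σ τ τ' : Struct) (i i' : ℕ)
    (hτ : τ.Valid) (hτ' : τ'.Valid)
    (hi1 : 1 ≤ i) (hii' : i < i') (hi'n : i' ≤ σ.n) :
    composeBase (composeBase σ i' τ') i τ
      = composeBase (composeBase σ i τ) (i' + τ.n - 1) τ' := by
  have hcomm : reindex i τ.n ∘ reindex i' τ'.n = reindex (i' + τ.n - 1) τ'.n ∘ reindex i τ.n :=
    funext fun x => reindex_reindex _ _ x hi1 hii'
  refine Struct.ext (show σ.n + τ'.n - 1 + τ.n - 1 = σ.n + τ.n - 1 + τ'.n - 1 by omega) ?_ ?_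
  · simp only [composeBase_pairs, Finset.image_union, Finset.image_image, Prod.map_comp_map,
      hcomm]
    rw [Finset.union_right_comm]
    refine congrArg₂ (· ∪ ·) (congrArg₂ (· ∪ ·) rfl ?_) ?_
    · refine Finset.image_congr fun q hq => ?_
      obtain ⟨hq1, hq12, hq2⟩ := hτ.1 q hq
      simp only [Function.comp_apply, Prod.map,
        reindex_of_lt _ (show q.1 + i - 1 < i' + τ.n - 1 by omega),
        reindex_of_lt _ (show q.2 + i - 1 < i' + τ.n - 1 by omega)]
    · refine Finset.image_congr fun q hq => ?_
      obtain ⟨hq1, hq12, -⟩ := hτ'.1 q hq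
      simp only [Function.comp_apply, Prod.map, reindex_add_sub_one _ hq1 hii',
        reindex_add_sub_one _ (hq1.trans hq12.le) hii']
  · simp only [composeBase_gap, Option.map_map, hcomm]

/-- Compositions along distinct unpaired bases commute after
reindexing: for unpaired bases `i < i'` of `σ` and 0-structures `τ = (m,Q)`
and `τ'`, `(σ ∘_{i'} τ') ∘_i τ = (σ ∘_i τ) ∘_{i'+m-1} τ'`. -/
theorem composeBase_comm (σ τ τ' : Struct) (i i' : ℕ)
    (hσ : σ.Valid) (hτ : τ.Valid) (hτ' : τ'.Valid)
    (hτ0 : τ.gap = none) (hτ'0 : τ'.gap = none)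
    (hi1 : 1 ≤ i) (hii' : i < i') (hi'n : i' ≤ σ.n)
    (hui : ¬ σ.Paired i) (hui' : ¬ σ.Paired i') :
    composeBase (composeBase σ i' τ') i τ
      = composeBase (composeBase σ i τ) (i' + τ.n - 1) τ' :=
  composeBase_comm_general σ τ τ' i i' hτ hτ' hi1 hii' hi'n

end RNA
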